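/- arXiv:2303.05435 — 5 statements merged into one kernel-verified Lean document; each statement's English description precedes it below -/
import Mathlib

section
/- Let G be a finite simple graph on vertex set V, let k ≥ 1, and let u₁, …, u_{4k} (in cyclic order) be the vertices of an induced cycle of G such that each of u₂, u₄, …, u_{4k} has degree exactly 2 in G. Define v ∈ {−1,0,1}^V by setting the coordinates indexed by u₂, u₆, …, u_{4k−2} to 1, the coordinates indexed by u₄, u₈, …, u_{4k} to −1, and all other coordinates to 0. Then v lies in the kernel of the real adjacency matrix A(G), i.e. A(G)·v = 0. -/
/-!
Write `A v y = ∑ c i` over the indices `i` with `u i` adjacent to `y`, where `c i` is the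
coefficient of `u i`. For `y = u j` on the cycle these indices are exactly `j ± 1`, and
`c (m + 2) = -c m`, so the two terms cancel. For `y` off the cycle, `u i` with `i` odd has its
two neighbours `u (i ± 1)` on the cycle already, so `y` only sees vertices with `c i = 0`.
-/

open Finset Matrix

theorem SimpleGraph.adjMatrix_mulVec_sum_ite_apply {V ι α : Type*} [Fintype V] [DecidableEq V]
    [Fintype ι] [NonAssocSemiring α] (G : SimpleGraph V) [DecidableRel G.Adj]
    (w : ι → V) (c : ι → α) (y : V) :
    (G.adjMatrix α *ᵥ fun x => ∑ i, if w i = x then c i else 0) y =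
      ∑ i with G.Adj y (w i), c i := by
  rw [adjMatrix_mulVec_apply, sum_comm, sum_filter]
  simp_rw [sum_ite_eq, mem_neighborFinset]

lemma ZMod.val_add_mod_of_dvd {n d : ℕ} [NeZero n] (hd : d ∣ n) (i j : ZMod n) :
    (i + j).val % d = (i.val + j.val) % d := by
  rw [ZMod.val_add, Nat.mod_mod_of_dvd _ hd]

lemma ZMod.add_one_ne_sub_one {n : ℕ} (hn : 2 < n) (j : ZMod n) : j + 1 ≠ j - 1 := by
  intro h
  have h2 : ((2 : ℕ) : ZMod n) = 0 := by push_cast; linear_combination h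
  have := Nat.le_of_dvd two_pos ((ZMod.natCast_eq_zero_iff 2 n).mp h2)
  omega

def quarterSign (m : ℕ) : ℝ := if m % 4 = 1 then 1 else if m % 4 = 3 then -1 else 0

lemma quarterSign_mod (m : ℕ) : quarterSign (m % 4) = quarterSign m := by
  simp only [quarterSign, Nat.mod_mod]

lemma quarterSign_add_two (m : ℕ) : quarterSign (m + 2) = -quarterSign m := by
  unfold quarterSign; split_ifs <;> first | omega | norm_num

lemma quarterSign_of_even {m : ℕ} (hm : Even m) : quarterSign m = 0 := by
  rw [Nat.even_iff] at hm
  unfold quarterSign; split_ifs <;> first | rfl | omega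

lemma quarterSign_val_add_two {n : ℕ} [NeZero n] (h4 : 4 ∣ n) (m : ZMod n) :
    quarterSign (m + 2).val = -quarterSign m.val := by
  have h2 : (2 : ZMod n).val = 2 := by
    rw [ZMod.val_two_eq_two_mod, Nat.mod_eq_of_lt]
    have := Nat.le_of_dvd (NeZero.pos n) h4
    omega
  rw [← quarterSign_mod, ZMod.val_add_mod_of_dvd h4, h2, quarterSign_mod, quarterSign_add_two]

section InducedCycle

variable {V : Type*} {G : SimpleGraph V} {n : ℕ} {u : ZMod n → V}

lemma adj_cycle_iff (hadj : ∀ i, G.Adj (u i) (u (i + 1)))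
    (hind : ∀ i j, G.Adj (u i) (u j) → j = i + 1 ∨ i = j + 1) (i j : ZMod n) :
    G.Adj (u i) (u j) ↔ j = i + 1 ∨ j = i - 1 := by
  refine ⟨fun h => (hind i j h).imp id fun h => eq_sub_of_add_eq h.symm, ?_⟩
  rintro (rfl | rfl)
  · exact hadj i
  · simpa using (hadj (i - 1)).symm

lemma neighborFinset_eq_of_degree_eq_two [Fintype V] [DecidableEq V] [DecidableRel G.Adj]
    (hn : 2 < n) (hinj : Function.Injective u) (hadj : ∀ i, G.Adj (u i) (u (i + 1)))
    {i : ZMod n} (hdeg : G.degree (u i) = 2) :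
    G.neighborFinset (u i) = {u (i + 1), u (i - 1)} := by
  symm
  refine eq_of_subset_of_card_le ?_ ?_
  · intro x hx
    simp only [mem_insert, mem_singleton] at hx
    rcases hx with rfl | rfl
    · simpa using hadj i
    · simpa using (hadj (i - 1)).symm
  · rw [G.card_neighborFinset_eq_degree, hdeg, card_pair (hinj.ne (ZMod.add_one_ne_sub_one hn i))]

lemma sum_adj_cycle {M : Type*} [AddCommMonoid M] [NeZero n] [DecidableRel G.Adj] (hn : 2 < n)
    (hadj : ∀ i, G.Adj (u i) (u (i + 1)))
    (hind : ∀ i j, G.Adj (u i) (u j) → j = i + 1 ∨ i = j + 1) (c : ZMod n → M) (j : ZMod n) :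
    ∑ i with G.Adj (u j) (u i), c i = c (j + 1) + c (j - 1) := by
  have hnbrs : ({i | G.Adj (u j) (u i)} : Finset (ZMod n)) = {j + 1, j - 1} := by
    ext i
    simp only [mem_filter, mem_univ, true_and, mem_insert, mem_singleton, adj_cycle_iff hadj hind]
  rw [hnbrs, sum_pair (ZMod.add_one_ne_sub_one hn j)]

end InducedCycle

theorem special_cycle_kernel_vector_general {V : Type*} [Fintype V] [DecidableEq V]
    (G : SimpleGraph V) [DecidableRel G.Adj] (k : ℕ) [NeZero (4 * k)]
    (u : ZMod (4 * k) → V) (hinj : Function.Injective u)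
    (hadj : ∀ i, G.Adj (u i) (u (i + 1)))
    (hind : ∀ i j, G.Adj (u i) (u j) → j = i + 1 ∨ i = j + 1)
    (hdeg : ∀ i : ZMod (4 * k), Odd i.val → G.degree (u i) = 2) :
    (G.adjMatrix ℝ).mulVec
      (fun x : V => ∑ i : ZMod (4 * k),
        if u i = x then
          (if i.val % 4 = 1 then (1 : ℝ) else if i.val % 4 = 3 then -1 else 0)
        else 0) = 0 := by
  have h4 : 4 ∣ 4 * k := dvd_mul_right 4 k
  have hn : 2 < 4 * k := by have := NeZero.ne (4 * k); omega
  change G.adjMatrix ℝ *ᵥ (fun x => ∑ i, if u i = x then quarterSign i.val else 0) = 0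
  funext y
  rw [Pi.zero_apply, G.adjMatrix_mulVec_sum_ite_apply]
  by_cases hy : ∃ j, u j = y
  · obtain ⟨j, rfl⟩ := hy
    rw [sum_adj_cycle hn hadj hind, show j + 1 = j - 1 + 2 by ring, quarterSign_val_add_two h4,
      neg_add_cancel]
  · refine sum_eq_zero fun i hi => quarterSign_of_even ?_
    by_contra hodd
    have hyi : y ∈ G.neighborFinset (u i) := G.mem_neighborFinset _ _ |>.2 (mem_filter.1 hi).2.symm
    rw [neighborFinset_eq_of_degree_eq_two hn hinj hadj (hdeg i (Nat.not_even_iff_odd.1 hodd)),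
      mem_insert, mem_singleton] at hyi
    exact hyi.elim (fun h => hy ⟨_, h.symm⟩) (fun h => hy ⟨_, h.symm⟩)

/-- Alternating ±1 around a special cycle gives a kernel vector of the adjacency
matrix: if `u 0, u 1, …, u (4k−1)` (cyclically indexed by `ZMod (4k)`) are the
vertices of an induced cycle of `G` in which every vertex with odd index has degree
exactly 2 in `G`, then the vector assigning `1` to the vertices with index `≡ 1 mod 4`,
`−1` to the vertices with index `≡ 3 mod 4`, and `0` elsewhere, lies in the kernel of
the real adjacency matrix of `G`. (The vertices `u` with odd index are the paper's
`u₂, u₄, …, u_{4k}`; those with index `≡ 1 mod 4` are `u₂, u₆, …, u_{4k−2}` and those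
with index `≡ 3 mod 4` are `u₄, u₈, …, u_{4k}`.) -/
theorem special_cycle_kernel_vector {V : Type*} [Fintype V] [DecidableEq V]
    (G : SimpleGraph V) [DecidableRel G.Adj] (k : ℕ) (hk : 1 ≤ k) [NeZero (4 * k)]
    (u : ZMod (4 * k) → V) (hinj : Function.Injective u)
    (hadj : ∀ i, G.Adj (u i) (u (i + 1)))
    (hind : ∀ i j, G.Adj (u i) (u j) → j = i + 1 ∨ i = j + 1)
    (hdeg : ∀ i : ZMod (4 * k), Odd i.val → G.degree (u i) = 2) :
    (G.adjMatrix ℝ).mulVec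
      (fun x : V => ∑ i : ZMod (4 * k),
        if u i = x then
          (if i.val % 4 = 1 then (1 : ℝ) else if i.val % 4 = 3 then -1 else 0)
        else 0) = 0 :=
  special_cycle_kernel_vector_general G k u hinj hadj hind hdeg
end

section
/- Let G be a finite simple graph, let v be a vertex of G of degree 1 with unique neighbour w, and let G′ = G − {v, w} be the induced subgraph obtained by deleting v and w. Then rank A(G′) = rank A(G) − 2, where A denotes the real adjacency matrix and rank is over ℝ. Moreover σ(G′) = σ(G) − 2, where σ(H) denotes the maximum total number of vertices covered by a collection of pairwise vertex-disjoint subgraphs of H each of which is a cycle or a single edge. -/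
/-!
Order the vertices as `{v, w}` followed by the rest. The adjacency matrix becomes a block matrix
whose `{v, w}` block is `!![0, 1; 1, 0]`, its own inverse; since row and column `v` vanish outside
`w`, the Schur complement of that block is exactly the adjacency matrix of `G - {v, w}`.

For `σ`, adding the edge `vw` to a packing of `G - {v, w}` gives `σ(G - {v, w}) + 2 ≤ σ(G)`.
Conversely, a leaf lies on no cycle, so in an optimal packing of `G` only the piece through `w`
can meet `{v, w}`. Dropping it if it is an edge, or replacing a cycle through `w` by consecutive
edges along the path left after deleting `w`, loses at most two vertices and yields a packing of
`G - {v, w}`.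
-/

open scoped Classical
open Finset

/-- `σ(G)`: the maximum total number of vertices covered by a collection of pairwise
vertex-disjoint subgraphs of `G`, each of which is a single edge (a vertex set `{u,v}`
with `u,v` adjacent) or a cycle (a vertex set `C` with `|C| ≥ 3` carrying a cyclic
ordering, given by a permutation acting as a single cycle on `C`, in which consecutive
vertices are adjacent). -/
noncomputable def sigmaNum {V : Type*} [Fintype V] [DecidableEq V] (G : SimpleGraph V) : ℕ :=
  sSup {k | ∃ 𝒞 : Finset (Finset V),
    (↑𝒞 : Set (Finset V)).Pairwise (fun C D => Disjoint C D) ∧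
    (∀ C ∈ 𝒞, (∃ u v, G.Adj u v ∧ C = {u, v}) ∨
      (3 ≤ C.card ∧ ∃ π : Equiv.Perm V, π.IsCycleOn ↑C ∧ ∀ v ∈ C, G.Adj v (π v))) ∧
    ∑ C ∈ 𝒞, C.card = k}

namespace LinearMap

variable {K M N M' N' : Type*} [Field K] [AddCommGroup M] [AddCommGroup N] [AddCommGroup M']
  [AddCommGroup N'] [Module K M] [Module K N] [Module K M'] [Module K N']

theorem finrank_range_prodMap [FiniteDimensional K M] [FiniteDimensional K N]
    (f : M →ₗ[K] M') (g : N →ₗ[K] N') :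
    Module.finrank K (f.prodMap g).range = Module.finrank K f.range + Module.finrank K g.range := by
  have hfac : f.prodMap g =
      f.range.subtype.prodMap g.range.subtype ∘ₗ f.rangeRestrict.prodMap g.rangeRestrict := rfl
  rw [hfac, range_comp_of_range_eq_top _ (by simp [range_prodMap]),
    finrank_range_of_inj (Subtype.val_injective.prodMap Subtype.val_injective),
    Module.finrank_prod]

end LinearMap

theorem Fintype.sum_coe_set_pair {V M : Type*} [DecidableEq V] [AddCommMonoid M] {v w : V}
    (hvw : v ≠ w) (f : ({v, w} : Set V) → M) : ∑ x, f x = f ⟨v, by simp⟩ + f ⟨w, by simp⟩ :=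
  Fintype.sum_eq_add _ _ (by simpa using hvw) fun ⟨x, hx⟩ hne => by
    rcases hx with rfl | rfl <;> simp at hne

namespace Matrix

variable {K : Type*} [Field K]

theorem rank_fromBlocks_zero₁₂_zero₂₁ {m n m' n' : Type*} [Fintype n] [Fintype n']
    (A : Matrix m n K) (D : Matrix m' n' K) : (fromBlocks A 0 0 D).rank = A.rank + D.rank := by
  have hfac : (fromBlocks A 0 0 D).mulVecLin =
      (LinearEquiv.sumArrowLequivProdArrow m m' K K).symm.toLinearMap ∘ₗ
        A.mulVecLin.prodMap D.mulVecLin ∘ₗ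
          (LinearEquiv.sumArrowLequivProdArrow n n' K K).toLinearMap := by
    refine LinearMap.ext fun x => funext fun i => ?_
    cases i <;> simp [fromBlocks_mulVec, LinearEquiv.sumArrowLequivProdArrow] <;> rfl
  rw [rank, hfac, LinearMap.range_comp, LinearMap.range_comp_of_range_eq_top _ (by simp),
    LinearEquiv.finrank_map_eq, LinearMap.finrank_range_prodMap, rank, rank]

theorem rank_fromBlocks_of_invertible₁₁ {m n : Type*} [Fintype m] [Fintype n] [DecidableEq m]
    [DecidableEq n] (A : Matrix m m K) (B : Matrix m n K) (C : Matrix n m K) (D : Matrix n n K)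
    [Invertible A] : (fromBlocks A B C D).rank = Fintype.card m + (D - C * ⅟A * B).rank := by
  rw [fromBlocks_eq_of_invertible₁₁, rank_mul_eq_left_of_isUnit_det _ _ (by simp),
    rank_mul_eq_right_of_isUnit_det _ _ (by simp), rank_fromBlocks_zero₁₂_zero₂₁,
    rank_of_isUnit _ (isUnit_of_invertible A)]

theorem rank_eq_rank_submatrix_compl_pair_add_two {V : Type*} [Fintype V] [DecidableEq V]
    (A : Matrix V V K) {v w : V} (hvw : v ≠ w) (hrow : ∀ u, A v u = if u = w then 1 else 0)
    (hcol : ∀ u, A u v = if u = w then 1 else 0) (hw : A w w = 0) :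
    A.rank = (A.submatrix (↑) (↑) : Matrix ({v, w}ᶜ : Set V) ({v, w}ᶜ : Set V) K).rank + 2 := by
  set e := Equiv.Set.sumCompl ({v, w} : Set V)
  set X := (A.submatrix e e).toBlocks₁₁
  have hXX : X * X = 1 := by
    ext ⟨i, hi⟩ ⟨j, hj⟩
    simp only [Set.mem_insert_iff, Set.mem_singleton_iff] at hi hj
    rcases hi with rfl | rfl <;> rcases hj with rfl | rfl <;>
      simp [X, e, mul_apply, Fintype.sum_coe_set_pair hvw, toBlocks₁₁, hrow, hcol, hw, hvw,
        hvw.symm]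
  let _ : Invertible X := ⟨X, hXX, hXX⟩
  have hinv : ⅟X = X := rfl
  -- `C` and `B` vanish in column and row `v`, so only `X⁻¹ w w = A w w = 0` contributes
  have hCXB : (A.submatrix e e).toBlocks₂₁ * ⅟X * (A.submatrix e e).toBlocks₁₂ = 0 := by
    ext ⟨a, ha⟩ ⟨b, hb⟩
    simp only [Set.mem_compl_iff, Set.mem_insert_iff, Set.mem_singleton_iff, not_or] at ha hb
    rw [hinv]
    simp [X, e, mul_apply, Fintype.sum_coe_set_pair hvw, toBlocks₁₁, toBlocks₁₂, toBlocks₂₁,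
      hrow, hcol, hw, ha, hb]
  rw [← rank_submatrix A e e, ← fromBlocks_toBlocks (A.submatrix e e),
    rank_fromBlocks_of_invertible₁₁, hCXB, sub_zero, add_comm]
  congr 1
  rw [← Nat.card_eq_fintype_card, Nat.card_coe_set_eq, Set.ncard_pair hvw]

end Matrix

namespace Equiv.Perm

variable {V : Type*} {s : Set V}

theorem IsCycleOn.exists_extendDomain {π : Perm s} {C : Finset s} (hπ : π.IsCycleOn ↑C) :
    ∃ π' : Perm V, π'.IsCycleOn ↑(C.map (Function.Embedding.subtype _)) ∧
      ∀ x : s, π' x = π x := by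
  refine ⟨π.extendDomain (Equiv.refl _), ?_, fun x => extendDomain_apply_image _ _ x⟩
  convert hπ.extendDomain (Equiv.refl _)
  ext
  simp

theorem IsCycleOn.exists_restrict [DecidablePred (· ∈ s)] {π : Perm V} {C : Finset V}
    (hπ : π.IsCycleOn ↑C) (hC : ↑C ⊆ s) :
    ∃ π' : Perm s, π'.IsCycleOn ↑(C.subtype (· ∈ s)) ∧ ∀ x : s, ↑x ∈ C → (π' x : V) = π x := by
  let e : ↥(C : Set V) ≃ {x : s // ↑x ∈ C} :=
    (Equiv.subtypeSubtypeEquivSubtype fun hx => hC hx).symm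
  refine ⟨(π.subtypePerm fun _ => hπ.apply_mem_iff).extendDomain e, ?_, fun x hx => ?_⟩
  · convert hπ.subtypePerm.extendDomain e
    ext x
    simp only [Finset.mem_coe, Finset.mem_subtype, Set.image_univ, Set.mem_range,
      Function.comp_apply]
    exact ⟨fun hx => ⟨⟨x, hx⟩, rfl⟩, by rintro ⟨y, rfl⟩; exact y.2⟩
  · rw [show x = e ⟨x, hx⟩ from rfl, extendDomain_apply_image]
    rfl

end Equiv.Perm

namespace SimpleGraph

variable {V : Type*} [DecidableEq V]

section Packing

variable (G : SimpleGraph V)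

def IsEdgeOrCycle (C : Finset V) : Prop :=
  (∃ u v, G.Adj u v ∧ C = {u, v}) ∨
    (3 ≤ #C ∧ ∃ π : Equiv.Perm V, π.IsCycleOn ↑C ∧ ∀ v ∈ C, G.Adj v (π v))

def IsPacking (𝒞 : Finset (Finset V)) : Prop :=
  (↑𝒞 : Set (Finset V)).Pairwise (fun C D => Disjoint C D) ∧ ∀ C ∈ 𝒞, G.IsEdgeOrCycle C

variable {G}

theorem IsEdgeOrCycle.two_le_card {C : Finset V} (h : G.IsEdgeOrCycle C) : 2 ≤ #C := by
  rcases h with ⟨u, v, huv, rfl⟩ | ⟨hC, -⟩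
  · rw [card_pair huv.ne]
  · omega

theorem IsPacking.mono {𝒞 𝒟 : Finset (Finset V)} (h : G.IsPacking 𝒞) (h𝒟 : 𝒟 ⊆ 𝒞) :
    G.IsPacking 𝒟 :=
  ⟨h.1.mono (coe_subset.2 h𝒟), fun C hC => h.2 C (h𝒟 hC)⟩

theorem IsPacking.union {𝒞 𝒟 : Finset (Finset V)} (h𝒞 : G.IsPacking 𝒞) (h𝒟 : G.IsPacking 𝒟)
    (hdisj : ∀ C ∈ 𝒞, ∀ D ∈ 𝒟, Disjoint C D) :
    G.IsPacking (𝒞 ∪ 𝒟) ∧ ∑ C ∈ 𝒞 ∪ 𝒟, #C = ∑ C ∈ 𝒞, #C + ∑ D ∈ 𝒟, #D := by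
  refine ⟨⟨?_, fun C hC => (mem_union.1 hC).elim (h𝒞.2 C) (h𝒟.2 C)⟩, sum_union ?_⟩
  · rw [coe_union, Set.pairwise_union_of_symm]
    exact ⟨h𝒞.1, h𝒟.1, fun C hC D hD _ => hdisj C hC D hD⟩
  · refine Finset.disjoint_left.2 fun C hC hC' => ?_
    have := (h𝒞.2 C hC).two_le_card
    rw [disjoint_self.1 (hdisj C hC C hC')] at this
    simp at this

theorem IsEdgeOrCycle.eq_pair_of_leaf {v w : V} (hleaf : ∀ u, G.Adj v u → u = w)
    {C : Finset V} (hC : G.IsEdgeOrCycle C) (hv : v ∈ C) : C = {v, w} := by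
  rcases hC with ⟨a, b, hab, rfl⟩ | ⟨hcard, π, hπ, hadj⟩
  · simp only [mem_insert, mem_singleton] at hv
    rcases hv with rfl | rfl
    · rw [hleaf b hab]
    · rw [hleaf a hab.symm, pair_comm]
  · exfalso
    have hsucc : π v = w := hleaf _ (hadj v hv)
    have hpred : π⁻¹ v = w := hleaf _ <| by
      simpa using (hadj _ ((hπ.apply_mem_iff (x := π⁻¹ v)).1 (by simpa using hv))).symm
    have hsq : (π ^ 2) v = v := by
      rw [pow_two, Equiv.Perm.mul_apply, hsucc, ← hpred]
      simp
    have := Nat.le_of_dvd two_pos ((hπ.pow_apply_eq hv).1 hsq)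
    omega

theorem IsEdgeOrCycle.coe_subset_compl_pair {v w : V} (hleaf : ∀ u, G.Adj v u → u = w)
    {D : Finset V} (hD : G.IsEdgeOrCycle D) (hwD : w ∉ D) : ↑D ⊆ ({v, w}ᶜ : Set V) := by
  intro x hxD hx
  rcases hx with rfl | rfl
  · exact hwD (by simp [hD.eq_pair_of_leaf hleaf hxD])
  · exact hwD hxD

theorem isPacking_image_pair {x : ℕ → V} {m : ℕ} (hx : Set.InjOn x (Set.Iio (2 * m)))
    (hadj : ∀ i < m, G.Adj (x (2 * i)) (x (2 * i + 1))) :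
    G.IsPacking ((range m).image fun i => {x (2 * i), x (2 * i + 1)}) ∧
      ∑ P ∈ (range m).image (fun i => {x (2 * i), x (2 * i + 1)}), #P = 2 * m := by
  have hx' : ∀ a < 2 * m, ∀ b < 2 * m, x a = x b → a = b := fun a ha b hb h => hx ha hb h
  have hdisj : ∀ i < m, ∀ j < m, i ≠ j →
      Disjoint ({x (2 * i), x (2 * i + 1)} : Finset V) {x (2 * j), x (2 * j + 1)} := by
    intro i hi j hj hij
    simp only [Finset.disjoint_left, mem_insert, mem_singleton]
    rintro _ (rfl | rfl) (h | h) <;> have := hx' _ (by omega) _ (by omega) h <;> omega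
  have hinj : Set.InjOn (fun i => ({x (2 * i), x (2 * i + 1)} : Finset V)) (range m) := by
    intro i hi j hj hij
    by_contra hne
    simp only at hij
    have := hdisj i (mem_range.1 hi) j (mem_range.1 hj) hne
    rw [← hij, disjoint_self] at this
    simp at this
  refine ⟨⟨?_, ?_⟩, ?_⟩
  · simp only [coe_image, coe_range]
    rintro _ ⟨i, hi, rfl⟩ _ ⟨j, hj, rfl⟩ hne
    exact hdisj i hi j hj fun h => hne (h ▸ rfl)
  · simp only [mem_image, mem_range]
    rintro _ ⟨i, hi, rfl⟩
    exact Or.inl ⟨_, _, hadj i hi, rfl⟩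
  · rw [sum_image hinj, sum_congr rfl fun i hi =>
      card_pair fun h => absurd (hx' _ (by simp at hi; omega) _ (by simp at hi; omega) h) (by omega)]
    simp [mul_comm]

theorem IsEdgeOrCycle.exists_isPacking_subset_erase {C : Finset V} (hC : G.IsEdgeOrCycle C)
    {w : V} (hw : w ∈ C) :
    ∃ 𝒟 : Finset (Finset V), G.IsPacking 𝒟 ∧ (∀ P ∈ 𝒟, P ⊆ C.erase w) ∧
      #C ≤ ∑ P ∈ 𝒟, #P + 2 := by
  rcases hC with ⟨a, b, hab, rfl⟩ | ⟨hcard, π, hπ, hadj⟩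
  · exact ⟨∅, by simp [IsPacking], by simp, by simpa using card_le_two⟩
  -- pair up the path `π w, π² w, …, π^(#C - 1) w` left after deleting `w`
  set x : ℕ → V := fun k => (π ^ (k + 1)) w
  have hmem : ∀ k, x k ∈ C := fun k => hπ.1.mapsTo.perm_pow _ hw
  have hx : ∀ a < #C - 1, ∀ b < #C - 1, x a = x b → a = b := by
    intro a ha b hb h
    have := (hπ.pow_apply_eq_pow_apply hw).1 h
    rw [Nat.ModEq, Nat.mod_eq_of_lt (by omega), Nat.mod_eq_of_lt (by omega)] at this
    omega
  have hne : ∀ k < #C - 1, x k ≠ w := fun k hk h => by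
    have := Nat.le_of_dvd (by omega) ((hπ.pow_apply_eq hw).1 h)
    omega
  obtain ⟨h𝒟, hsum⟩ := isPacking_image_pair (G := G) (m := (#C - 1) / 2) (x := x)
    (fun a ha b hb h => hx a (by simp at ha; omega) b (by simp at hb; omega) h)
    fun i _ => by
      have := hadj _ (hmem (2 * i))
      simp only [x] at this ⊢
      rwa [← Equiv.Perm.mul_apply, ← pow_succ'] at this
  refine ⟨_, h𝒟, ?_, by omega⟩
  simp only [mem_image, mem_range]
  rintro _ ⟨i, hi, rfl⟩
  simp only [insert_subset_iff, singleton_subset_iff, mem_erase]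
  exact ⟨⟨hne _ (by omega), hmem _⟩, hne _ (by omega), hmem _⟩

theorem IsEdgeOrCycle.exists_isPacking_subset_sdiff_pair {v w : V}
    (hleaf : ∀ u, G.Adj v u → u = w) {C : Finset V} (hC : G.IsEdgeOrCycle C) (hw : w ∈ C) :
    ∃ 𝒟 : Finset (Finset V), G.IsPacking 𝒟 ∧ (∀ P ∈ 𝒟, P ⊆ C \ {v, w}) ∧
      #C ≤ ∑ P ∈ 𝒟, #P + 2 := by
  by_cases hvC : v ∈ C
  · refine ⟨∅, by simp [IsPacking], by simp, ?_⟩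
    simpa [hC.eq_pair_of_leaf hleaf hvC] using card_le_two
  obtain ⟨𝒟, h𝒟, h𝒟C, hcard⟩ := hC.exists_isPacking_subset_erase hw
  refine ⟨𝒟, h𝒟, fun P hP => (h𝒟C P hP).trans fun x hx => ?_, hcard⟩
  simp only [mem_erase] at hx
  simp only [mem_sdiff, mem_insert, mem_singleton, not_or]
  exact ⟨hx.2, fun h => hvC (h ▸ hx.2), hx.1⟩

end Packing

section Induce

variable {G : SimpleGraph V} {s : Set V}

theorem IsEdgeOrCycle.map_subtype {C : Finset s} (h : (G.induce s).IsEdgeOrCycle C) :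
    G.IsEdgeOrCycle (C.map (Function.Embedding.subtype _)) := by
  rcases h with ⟨u, u', huu', rfl⟩ | ⟨hcard, π, hπ, hadj⟩
  · exact Or.inl ⟨u, u', huu', by simp⟩
  · obtain ⟨π', hπ', hπ'π⟩ := hπ.exists_extendDomain
    refine Or.inr ⟨by simpa using hcard, π', hπ', ?_⟩
    simp only [mem_map, Function.Embedding.coe_subtype]
    rintro _ ⟨x, hx, rfl⟩
    rw [hπ'π]
    exact hadj x hx

theorem IsEdgeOrCycle.subtype [DecidablePred (· ∈ s)] {C : Finset V} (h : G.IsEdgeOrCycle C)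
    (hC : ↑C ⊆ s) : (G.induce s).IsEdgeOrCycle (C.subtype (· ∈ s)) := by
  rcases h with ⟨u, u', huu', rfl⟩ | ⟨hcard, π, hπ, hadj⟩
  · refine Or.inl ⟨⟨u, hC (by simp)⟩, ⟨u', hC (by simp)⟩, huu', ?_⟩
    ext
    simp [Subtype.ext_iff]
  · obtain ⟨π', hπ', hπ'π⟩ := hπ.exists_restrict hC
    refine Or.inr ⟨?_, π', hπ', fun x hx => ?_⟩
    · rwa [card_subtype, filter_true_of_mem fun x hx => hC hx]
    · have hx' : ↑x ∈ C := mem_subtype.1 hx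
      simpa [hπ'π x hx'] using hadj x hx'

theorem IsPacking.exists_of_induce {𝒞 : Finset (Finset s)} (h : (G.induce s).IsPacking 𝒞) :
    ∃ 𝒟 : Finset (Finset V), G.IsPacking 𝒟 ∧ (∀ D ∈ 𝒟, ↑D ⊆ s) ∧
      ∑ D ∈ 𝒟, #D = ∑ C ∈ 𝒞, #C := by
  refine ⟨𝒞.map (mapEmbedding (Function.Embedding.subtype _)).toEmbedding, ⟨?_, ?_⟩, ?_, ?_⟩
  · rw [coe_map]
    rintro _ ⟨C, hC, rfl⟩ _ ⟨D, hD, rfl⟩ hne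
    exact (disjoint_map _).2 (h.1 hC hD fun hCD => hne (hCD ▸ rfl))
  · simp only [mem_map, RelEmbedding.coe_toEmbedding]
    rintro _ ⟨C, hC, rfl⟩
    exact (h.2 C hC).map_subtype
  · simp
  · simp

end Induce

section Sigma

variable [Fintype V] {G : SimpleGraph V}

theorem IsPacking.sum_card_le_card {𝒞 : Finset (Finset V)} (h : G.IsPacking 𝒞) :
    ∑ C ∈ 𝒞, #C ≤ Fintype.card V := by
  rw [← card_biUnion fun C hC D hD hCD => h.1 hC hD hCD]
  exact card_le_univ _

theorem sigmaNum_eq_sSup :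
    sigmaNum G = sSup {k | ∃ 𝒞 : Finset (Finset V), G.IsPacking 𝒞 ∧ ∑ C ∈ 𝒞, #C = k} := by
  simp only [sigmaNum, IsPacking, IsEdgeOrCycle, and_assoc]

theorem bddAbove_sum_card_isPacking :
    BddAbove {k | ∃ 𝒞 : Finset (Finset V), G.IsPacking 𝒞 ∧ ∑ C ∈ 𝒞, #C = k} :=
  ⟨Fintype.card V, by rintro _ ⟨𝒞, h, rfl⟩; exact h.sum_card_le_card⟩

theorem IsPacking.sum_card_le_sigmaNum {𝒞 : Finset (Finset V)} (h : G.IsPacking 𝒞) :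
    ∑ C ∈ 𝒞, #C ≤ sigmaNum G := by
  rw [sigmaNum_eq_sSup]
  exact le_csSup bddAbove_sum_card_isPacking ⟨𝒞, h, rfl⟩

theorem exists_isPacking_sum_card_eq_sigmaNum (G : SimpleGraph V) :
    ∃ 𝒞 : Finset (Finset V), G.IsPacking 𝒞 ∧ ∑ C ∈ 𝒞, #C = sigmaNum G := by
  rw [sigmaNum_eq_sSup]
  refine Nat.sSup_mem ?_ bddAbove_sum_card_isPacking
  exact ⟨0, ∅, by simp [IsPacking]⟩

end Sigma

theorem IsPacking.sum_card_le_sigmaNum_induce {G : SimpleGraph V} {s : Set V} [Fintype s]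
    {𝒞 : Finset (Finset V)} (h : G.IsPacking 𝒞) (hs : ∀ C ∈ 𝒞, ↑C ⊆ s) :
    ∑ C ∈ 𝒞, #C ≤ sigmaNum (G.induce s) := by
  have hinj : Set.InjOn (Finset.subtype (· ∈ s)) 𝒞 := fun C hC D hD hCD => by
    rw [← subtype_map_of_mem (hs C hC), hCD, subtype_map_of_mem (hs D hD)]
  have hpack : (G.induce s).IsPacking (𝒞.image (Finset.subtype (· ∈ s))) := by
    refine ⟨?_, ?_⟩
    · rw [coe_image]
      rintro _ ⟨C, hC, rfl⟩ _ ⟨D, hD, rfl⟩ hne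
      have hCD := Finset.disjoint_left.1 (h.1 hC hD fun hCD => hne (hCD ▸ rfl))
      simpa [Finset.disjoint_left] using fun x _ hx => hCD hx
    · simp only [mem_image]
      rintro _ ⟨C, hC, rfl⟩
      exact (h.2 C hC).subtype (hs C hC)
  calc ∑ C ∈ 𝒞, #C = ∑ C ∈ 𝒞.image (Finset.subtype (· ∈ s)), #C := by
        rw [sum_image hinj]
        exact sum_congr rfl fun C hC => by rw [card_subtype, filter_true_of_mem (hs C hC)]
    _ ≤ sigmaNum (G.induce s) := hpack.sum_card_le_sigmaNum

section LeafRemoval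

variable [Fintype V] {G : SimpleGraph V} {v w : V}

theorem rank_adjMatrix_induce_compl_pair_add_two {K : Type*} [Field K]
    (hleaf : ∀ u, G.Adj v u → u = w) (hadj : G.Adj v w) :
    ((G.induce ({v, w}ᶜ : Set V)).adjMatrix K).rank + 2 = (G.adjMatrix K).rank := by
  have hrow : ∀ u, G.adjMatrix K v u = if u = w then 1 else 0 := fun u => by
    by_cases hu : u = w
    · simp [hu, hadj]
    · simp [hu, mt (hleaf u) hu]
  rw [Matrix.rank_eq_rank_submatrix_compl_pair_add_two _ hadj.ne hrow
    (fun u => by rw [← hrow, adjMatrix_apply, adjMatrix_apply, G.adj_comm]) (by simp)]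
  congr 2

theorem sigmaNum_induce_compl_pair_add_two_le (hadj : G.Adj v w) :
    sigmaNum (G.induce ({v, w}ᶜ : Set V)) + 2 ≤ sigmaNum G := by
  obtain ⟨𝒞, h𝒞, hsum𝒞⟩ := (G.induce ({v, w}ᶜ : Set V)).exists_isPacking_sum_card_eq_sigmaNum
  obtain ⟨𝒟, h𝒟, hs, hsum𝒟⟩ := h𝒞.exists_of_induce
  have hedge : G.IsPacking {{v, w}} :=
    ⟨by simp, fun C hC => by rw [mem_singleton.1 hC]; exact Or.inl ⟨v, w, hadj, rfl⟩⟩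
  obtain ⟨hpack, hsum⟩ := h𝒟.union hedge fun D hD E hE => by
    rw [mem_singleton.1 hE]
    exact Finset.disjoint_left.2 fun x hxD hxE => hs D hD hxD (by simpa using hxE)
  have := hpack.sum_card_le_sigmaNum
  rwa [hsum, sum_singleton, card_pair hadj.ne, hsum𝒟, hsum𝒞] at this

theorem sigmaNum_le_sigmaNum_induce_compl_pair_add_two (hleaf : ∀ u, G.Adj v u → u = w) :
    sigmaNum G ≤ sigmaNum (G.induce ({v, w}ᶜ : Set V)) + 2 := by
  obtain ⟨𝒞, h𝒞, hsum𝒞⟩ := G.exists_isPacking_sum_card_eq_sigmaNum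
  rw [← hsum𝒞]
  by_cases hw : ∃ C ∈ 𝒞, w ∈ C
  swap
  · simp only [not_exists, not_and] at hw
    exact (h𝒞.sum_card_le_sigmaNum_induce fun C hC =>
      (h𝒞.2 C hC).coe_subset_compl_pair hleaf (hw C hC)).trans (Nat.le_add_right _ _)
  obtain ⟨C, hC, hwC⟩ := hw
  obtain ⟨𝒟, h𝒟, h𝒟C, hcard⟩ := (h𝒞.2 C hC).exists_isPacking_subset_sdiff_pair hleaf hwC
  have hdisj : ∀ D ∈ 𝒞.erase C, Disjoint D C := fun D hD =>
    h𝒞.1 (mem_of_mem_erase hD) hC (ne_of_mem_erase hD)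
  obtain ⟨hpack, hsum⟩ := (h𝒞.mono (erase_subset C 𝒞)).union h𝒟 fun D hD P hP =>
    (hdisj D hD).mono_right ((h𝒟C P hP).trans sdiff_subset)
  have hs : ∀ D ∈ 𝒞.erase C ∪ 𝒟, ↑D ⊆ ({v, w}ᶜ : Set V) := by
    intro D hD
    rcases mem_union.1 hD with hD | hD
    · exact (h𝒞.2 D (mem_of_mem_erase hD)).coe_subset_compl_pair hleaf
        fun hwD => Finset.disjoint_left.1 (hdisj D hD) hwD hwC
    · intro x hx
      simpa using (mem_sdiff.1 (h𝒟C D hD hx)).2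
  have := hpack.sum_card_le_sigmaNum_induce hs
  rw [← add_sum_erase 𝒞 _ hC]
  omega

end LeafRemoval

end SimpleGraph

/-- Removing a leaf `v` together with its unique neighbour `w` decreases the rank of
the real adjacency matrix by exactly 2, and decreases `σ` by exactly 2. -/
theorem leaf_removal_rank_sigma {V : Type*} [Fintype V] [DecidableEq V]
    (G : SimpleGraph V) (v w : V) (hdeg : G.degree v = 1) (hadj : G.Adj v w) :
    ((G.induce ({v, w}ᶜ : Set V)).adjMatrix ℝ).rank + 2 = (G.adjMatrix ℝ).rank ∧
    sigmaNum (G.induce ({v, w}ᶜ : Set V)) + 2 = sigmaNum G := by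
  have hleaf : ∀ u, G.Adj v u → u = w := fun u hu =>
    (SimpleGraph.degree_eq_one_iff_existsUnique_adj.1 hdeg).unique hu hadj
  exact ⟨SimpleGraph.rank_adjMatrix_induce_compl_pair_add_two hleaf hadj,
    le_antisymm (SimpleGraph.sigmaNum_induce_compl_pair_add_two_le hadj)
      (SimpleGraph.sigmaNum_le_sigmaNum_induce_compl_pair_add_two hleaf)⟩
end

section
/- Let G be a finite simple bipartite graph with parts V₁, V₂, let v be a vertex of G of degree 1 with unique neighbour w, and let G′ = G − {v, w} be the induced bipartite subgraph obtained by deleting v and w. Then rank B(G′) = rank B(G) − 1, where B denotes the real biadjacency matrix and rank is over ℝ. -/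
/-!
Say the leaf is `v = a₀ ∈ V₁` with neighbour `w = b₀` (otherwise transpose). Then row `a₀` of `B(G)`
is the unit vector at `b₀`, so every vector in the kernel of `B(G)` vanishes at `b₀`, and extension
by zero identifies the kernel of `B(G′)`, i.e. `B(G)` with row `a₀` and column `b₀` deleted, with
that of `B(G)`. Since `B(G′)` has one column fewer, rank–nullity gives the claim.
-/

open Function

namespace Matrix

variable {m n : Type*}

theorem rank_submatrix_subtype_congr {R : Type*} [CommRing R] (M : Matrix m n R)
    {p p' : m → Prop} {q q' : n → Prop} [Fintype {j // q j}] [Fintype {j // q' j}]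
    (hp : ∀ i, p i ↔ p' i) (hq : ∀ j, q j ↔ q' j) :
    (M.submatrix ((↑) : {i // p i} → m) ((↑) : {j // q j} → n)).rank =
      (M.submatrix ((↑) : {i // p' i} → m) ((↑) : {j // q' j} → n)).rank :=
  rank_submatrix (M.submatrix ((↑) : {i // p' i} → m) ((↑) : {j // q' j} → n))
    (Equiv.subtypeEquivRight hp) (Equiv.subtypeEquivRight hq)

variable {K : Type*} [Field K] [Fintype n]

theorem rank_add_finrank_ker_mulVecLin (M : Matrix m n K) :
    M.rank + Module.finrank K (LinearMap.ker M.mulVecLin) = Fintype.card n := by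
  rw [rank, LinearMap.finrank_range_add_finrank_ker, Module.finrank_fintype_fun_eq_card]

theorem mulVec_extendByZero {ι : Type*} [Fintype ι] (M : Matrix m n K) {f : ι → n}
    (hf : Injective f) (y : ι → K) :
    M *ᵥ ExtendByZero.linearMap K f y = M.submatrix id f *ᵥ y := by
  ext i
  refine (Fintype.sum_of_injective f hf _ _ (fun j hj => ?_) (fun k => ?_)).symm
  · rw [ExtendByZero.linearMap_apply, extend_apply' _ _ _ (by simpa using hj), Pi.zero_apply,
      mul_zero]
  · rw [ExtendByZero.linearMap_apply, hf.extend_apply]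
    rfl

theorem apply_eq_zero_of_mulVec_eq_zero {M : Matrix m n K} {i₀ : m} {j₀ : n}
    (hpivot : M i₀ j₀ ≠ 0) (hrow : ∀ j ≠ j₀, M i₀ j = 0) {x : n → K} (hx : M *ᵥ x = 0) :
    x j₀ = 0 := by
  have hx₀ := congrFun hx i₀
  rw [mulVec, dotProduct, Finset.sum_eq_single j₀ (fun j _ hj => by rw [hrow j hj, zero_mul])
    (by simp)] at hx₀
  exact (mul_eq_zero.1 hx₀).resolve_left hpivot

variable [DecidableEq n]

theorem ker_mulVecLin_eq_map_extendByZero {M : Matrix m n K} {i₀ : m} {j₀ : n}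
    (hpivot : M i₀ j₀ ≠ 0) (hrow : ∀ j ≠ j₀, M i₀ j = 0) :
    LinearMap.ker M.mulVecLin =
      (LinearMap.ker (M.submatrix ((↑) : {i // i ≠ i₀} → m)
        ((↑) : {j // j ≠ j₀} → n)).mulVecLin).map
        (ExtendByZero.linearMap K ((↑) : {j // j ≠ j₀} → n)) := by
  ext x
  simp only [LinearMap.mem_ker, mulVecLin_apply, Submodule.mem_map]
  constructor
  · intro hx
    have hxE : ExtendByZero.linearMap K ((↑) : {j // j ≠ j₀} → n) (x ∘ (↑)) = x := by
      ext j
      rw [ExtendByZero.linearMap_apply]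
      by_cases hj : j = j₀
      · subst hj
        rw [extend_apply' _ _ _ (by simp), apply_eq_zero_of_mulVec_eq_zero hpivot hrow hx,
          Pi.zero_apply]
      · exact Subtype.val_injective.extend_apply _ _ (⟨j, hj⟩ : {j // j ≠ j₀})
    rw [← hxE, mulVec_extendByZero _ Subtype.val_injective] at hx
    exact ⟨_, funext fun i => congrFun hx i, hxE⟩
  · rintro ⟨y, hy, rfl⟩
    rw [mulVec_extendByZero _ Subtype.val_injective]
    ext i
    by_cases hi : i = i₀
    · subst hi
      exact Finset.sum_eq_zero fun j _ => by simp [hrow j j.2]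
    · exact congrFun hy ⟨i, hi⟩

theorem rank_submatrix_ne_add_one_of_row {M : Matrix m n K} {i₀ : m} {j₀ : n}
    (hpivot : M i₀ j₀ ≠ 0) (hrow : ∀ j ≠ j₀, M i₀ j = 0) :
    (M.submatrix ((↑) : {i // i ≠ i₀} → m) ((↑) : {j // j ≠ j₀} → n)).rank + 1 = M.rank := by
  set M' := M.submatrix ((↑) : {i // i ≠ i₀} → m) ((↑) : {j // j ≠ j₀} → n)
  have hker := (Submodule.equivMapOfInjective (ExtendByZero.linearMap K ((↑) : {j // j ≠ j₀} → n))
    (extend_injective Subtype.val_injective (0 : n → K)) (LinearMap.ker M'.mulVecLin)).finrank_eq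
  rw [← ker_mulVecLin_eq_map_extendByZero hpivot hrow] at hker
  have hcard := Fintype.card_congr (Equiv.optionSubtypeNe j₀)
  rw [Fintype.card_option] at hcard
  have hM := rank_add_finrank_ker_mulVecLin M
  have hM' := rank_add_finrank_ker_mulVecLin M'
  omega

theorem rank_submatrix_ne_add_one_of_col [Fintype m] [DecidableEq m] {M : Matrix m n K} {i₀ : m}
    {j₀ : n} (hpivot : M i₀ j₀ ≠ 0) (hcol : ∀ i ≠ i₀, M i j₀ = 0) :
    (M.submatrix ((↑) : {i // i ≠ i₀} → m) ((↑) : {j // j ≠ j₀} → n)).rank + 1 = M.rank := by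
  rw [← rank_transpose M, ← rank_transpose, transpose_submatrix]
  exact rank_submatrix_ne_add_one_of_row (M := Mᵀ) hpivot hcol

end Matrix

namespace SimpleGraph

variable {V : Type*} (G : SimpleGraph V)

theorem eq_of_adj_of_degree_eq_one {v u w : V} [Fintype (G.neighborSet v)] (hdeg : G.degree v = 1)
    (hu : G.Adj v u) (hw : G.Adj v w) : u = w := by
  obtain ⟨x, -, hx⟩ := degree_eq_one_iff_existsUnique_adj.1 hdeg
  exact (hx u hu).trans (hx w hw).symm

def biadjMatrix {α β : Type*} (R : Type*) [Zero R] [One R] (G : SimpleGraph (α ⊕ β))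
    [DecidableRel G.Adj] : Matrix α β R :=
  Matrix.of fun a b => if G.Adj (.inl a) (.inr b) then 1 else 0

end SimpleGraph

open scoped Classical in
/-- Removing a leaf `v` of a bipartite graph together with its unique neighbour `w`
(one vertex from each part) decreases the rank of the real biadjacency matrix by
exactly 1. -/
theorem bipartite_leaf_removal_rank {α β : Type*} [Fintype α] [Fintype β]
    [DecidableEq α] [DecidableEq β] (G : SimpleGraph (α ⊕ β))
    (hbip₁ : ∀ a a' : α, ¬G.Adj (Sum.inl a) (Sum.inl a'))
    (hbip₂ : ∀ b b' : β, ¬G.Adj (Sum.inr b) (Sum.inr b'))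
    (v w : α ⊕ β) (hdeg : G.degree v = 1) (hadj : G.Adj v w) :
    (Matrix.of fun (a : {a : α // (Sum.inl a : α ⊕ β) ≠ v ∧ (Sum.inl a : α ⊕ β) ≠ w})
        (b : {b : β // (Sum.inr b : α ⊕ β) ≠ v ∧ (Sum.inr b : α ⊕ β) ≠ w}) =>
        if G.Adj (Sum.inl a.1) (Sum.inr b.1) then (1 : ℝ) else 0).rank + 1 =
      (Matrix.of fun (a : α) (b : β) =>
        if G.Adj (Sum.inl a) (Sum.inr b) then (1 : ℝ) else 0).rank := by
  have hleaf : ∀ u, G.Adj v u → u = w := fun u hu => G.eq_of_adj_of_degree_eq_one hdeg hu hadj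
  rcases v with a₀ | b₀ <;> rcases w with a₁ | b₁
  · exact absurd hadj (hbip₁ a₀ a₁)
  · calc _ = ((G.biadjMatrix ℝ).submatrix ((↑) : {a // a ≠ a₀} → α)
            ((↑) : {b // b ≠ b₁} → β)).rank + 1 :=
          congrArg (· + 1) ((G.biadjMatrix ℝ).rank_submatrix_subtype_congr (by simp) (by simp))
      _ = _ := Matrix.rank_submatrix_ne_add_one_of_row (by simp [SimpleGraph.biadjMatrix, hadj])
          fun b hb => if_neg fun h => hb (Sum.inr_injective (hleaf _ h))
  · calc _ = ((G.biadjMatrix ℝ).submatrix ((↑) : {a // a ≠ a₁} → α)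
            ((↑) : {b // b ≠ b₀} → β)).rank + 1 :=
          congrArg (· + 1) ((G.biadjMatrix ℝ).rank_submatrix_subtype_congr (by simp) (by simp))
      _ = _ := Matrix.rank_submatrix_ne_add_one_of_col
          (by simp [SimpleGraph.biadjMatrix, hadj.symm])
          fun a ha => if_neg fun h => ha (Sum.inl_injective (hleaf _ h.symm))
  · exact absurd hadj (hbip₂ b₀ b₁)
end

section
/- Let A ∈ ℝ^{n×n} and v ∈ ℝ^n. Then v can be written as a finite sum of vectors w, each of which is minimal with respect to A and satisfies supp(Aw) ⊆ supp(Av). -/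
open Finset

/-- `w` is minimal with respect to `A`: no nonzero vector `u` whose support is
strictly contained in the support of `w` satisfies `supp(Au) ⊆ supp(Aw)`. -/
def IsMinimalVec {n : ℕ} (A : Matrix (Fin n) (Fin n) ℝ) (w : Fin n → ℝ) : Prop :=
  ∀ u : Fin n → ℝ, u ≠ 0 → Function.support u ⊂ Function.support w →
    ¬Function.support (A.mulVec u) ⊆ Function.support (A.mulVec w)

/-!
If `v` is not minimal, a witness `u` lets us split `v = (v - c • u) + c • u` with `c = v i / u i`
for some `i` with `u i ≠ 0`: the first summand vanishes at `i` and the second has the support of `u`,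
so both have strictly smaller support than `v`, and the images of both under `A` are supported in
`supp(Av)`. Induction on the support of `v` then decomposes `v` into minimal vectors.
-/

theorem Function.support_sub_div_smul_ssubset {ι K : Type*} [Field K] {u v : ι → K} {i : ι}
    (hui : u i ≠ 0) (huv : Function.support u ⊆ Function.support v) :
    Function.support (v - (v i / u i) • u) ⊂ Function.support v := by
  have hvi : v i ≠ 0 := huv hui
  refine ⟨?_, fun h => ?_⟩
  · calc Function.support (v - (v i / u i) • u)
        ⊆ Function.support v ∪ Function.support ((v i / u i) • u) := Function.support_sub _ _
      _ ⊆ Function.support v := Set.union_subset le_rfl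
          ((Function.support_const_smul_subset _ _).trans huv)
  · have hi : v i - v i / u i * u i ≠ 0 := h hvi
    exact hi (by field_simp; ring)

theorem exists_add_eq_of_not_isMinimalVec {n : ℕ} {A : Matrix (Fin n) (Fin n) ℝ}
    {v : Fin n → ℝ} (hv : ¬IsMinimalVec A v) :
    ∃ v₁ v₂ : Fin n → ℝ, v₁ + v₂ = v ∧
      Function.support v₁ ⊂ Function.support v ∧ Function.support v₂ ⊂ Function.support v ∧
      Function.support (A.mulVec v₁) ⊆ Function.support (A.mulVec v) ∧
      Function.support (A.mulVec v₂) ⊆ Function.support (A.mulVec v) := by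
  simp only [IsMinimalVec, not_forall, not_not] at hv
  obtain ⟨u, hu, huv, hAuv⟩ := hv
  obtain ⟨i, hui⟩ := Function.ne_iff.mp hu
  set c := v i / u i
  have hc : c ≠ 0 := div_ne_zero (huv.subset hui) hui
  have hAcu : Function.support (A.mulVec (c • u)) = Function.support (A.mulVec u) := by
    rw [Matrix.mulVec_smul, Function.support_const_smul_of_ne_zero _ _ hc]
  refine ⟨v - c • u, c • u, sub_add_cancel v _,
    Function.support_sub_div_smul_ssubset hui huv.subset, ?_, ?_, ?_⟩
  · rwa [Function.support_const_smul_of_ne_zero _ _ hc]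
  · rw [Matrix.mulVec_sub]
    exact (Function.support_sub _ _).trans (Set.union_subset le_rfl (hAcu ▸ hAuv))
  · exact hAcu ▸ hAuv

/-- Every vector can be written as a finite sum of minimal vectors `w` with
`supp(Aw) ⊆ supp(Av)`. -/
theorem minimal_decomposition {n : ℕ} (A : Matrix (Fin n) (Fin n) ℝ) (v : Fin n → ℝ) :
    ∃ L : List (Fin n → ℝ), L.sum = v ∧
      ∀ w ∈ L, IsMinimalVec A w ∧
        Function.support (A.mulVec w) ⊆ Function.support (A.mulVec v) := by
  induction hs : Function.support v using WellFoundedLT.induction generalizing v with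
  | _ s ih =>
  subst hs
  by_cases hv : IsMinimalVec A v
  · exact ⟨[v], List.sum_singleton, by simp [hv]⟩
  obtain ⟨v₁, v₂, hsum, hs₁, hs₂, hA₁, hA₂⟩ := exists_add_eq_of_not_isMinimalVec hv
  obtain ⟨L₁, hL₁, hw₁⟩ := ih _ hs₁ v₁ rfl
  obtain ⟨L₂, hL₂, hw₂⟩ := ih _ hs₂ v₂ rfl
  refine ⟨L₁ ++ L₂, by rw [List.sum_append, hL₁, hL₂, hsum], fun w hw => ?_⟩
  rcases List.mem_append.mp hw with hw | hw
  · exact ⟨(hw₁ w hw).1, (hw₁ w hw).2.trans hA₁⟩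
  · exact ⟨(hw₂ w hw).1, (hw₂ w hw).2.trans hA₂⟩
end

section
/- Let A ∈ ℝ^{n×n}, let S ⊆ {1,…,n} be the union of the supports of all kernel vectors of A, let P ∈ ℝ^{n×n} be the diagonal matrix with P_{ii} = 1 for i ∉ S and P_{ii} = 0 for i ∈ S, and suppose B ∈ ℝ^{n×n} satisfies AB = P. Let x, y ∈ ℝ^n and c ∈ ℝ, and let A′ ∈ ℝ^{(n+1)×(n+1)} be the block matrix with A in the top-left n×n block, x as the last column's first n entries, yᵀ as the last row's first n entries, and c in the bottom-right entry. If x_i = 0 for all i ∈ S and yᵀBx ≠ c, then rank A′ ≥ rank A + 1, where rank is over ℝ. -/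
open scoped Classical
open Finset

/-- The union of the supports of all kernel vectors of `A`. -/
def kerSupport {n : ℕ} (A : Matrix (Fin n) (Fin n) ℝ) : Set (Fin n) :=
  {i | ∃ v : Fin n → ℝ, A.mulVec v = 0 ∧ v i ≠ 0}

/-- The projection onto the coordinates outside the support of the kernel of `A`. -/
noncomputable def kerProj {n : ℕ} (A : Matrix (Fin n) (Fin n) ℝ) :
    Matrix (Fin n) (Fin n) ℝ :=
  Matrix.of fun i j => if i = j ∧ i ∉ kerSupport A then 1 else 0

/-- The matrix `A` bordered by a new column `x`, a new row `y`, and corner entry `c`. -/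
noncomputable def borderMatrix {n : ℕ} (A : Matrix (Fin n) (Fin n) ℝ)
    (x y : Fin n → ℝ) (c : ℝ) : Matrix (Option (Fin n)) (Option (Fin n)) ℝ :=
  Matrix.of fun i j =>
    match i, j with
    | some a, some b => A a b
    | some a, none => x a
    | none, some b => y b
    | none, none => c

/-! Since `x` vanishes on the kernel support, `P x = x`, so `w = B x` solves `A w = x`. Then the
bordered matrix sends `(w, -1)` to `(0, yᵀw - c)`, a nonzero multiple of the last basis vector `e`,
so its range contains `e` together with the range of `A` placed in the first `n` coordinates
(as `(A u, yᵀu) - (yᵀu) e`); this gives one dimension more than `rank A`. -/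

open Matrix Module

section BorderMatrix

variable {n : ℕ} (A : Matrix (Fin n) (Fin n) ℝ) (x y : Fin n → ℝ) (c : ℝ)

theorem borderMatrix_mulVec_piOptionEquivProd_symm (a : ℝ) (u : Fin n → ℝ) :
    borderMatrix A x y c *ᵥ (LinearEquiv.piOptionEquivProd ℝ).symm (a, u) =
      (LinearEquiv.piOptionEquivProd ℝ).symm (y ⬝ᵥ u + c * a, A *ᵥ u + a • x) := by
  ext (_ | i) <;>
    simp [borderMatrix, mulVec, dotProduct, Fintype.sum_option, LinearEquiv.piOptionEquivProd,
      mul_comm, add_comm]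

theorem rank_add_one_le_rank_borderMatrix {w : Fin n → ℝ} (hw : A *ᵥ w = x)
    (hyw : y ⬝ᵥ w ≠ c) : A.rank + 1 ≤ (borderMatrix A x y c).rank := by
  let E := (LinearEquiv.piOptionEquivProd ℝ (ι := Fin n) (M := fun _ => ℝ)).symm
  let j : (Fin n → ℝ) →ₗ[ℝ] Option (Fin n) → ℝ := E.toLinearMap ∘ₗ LinearMap.inr ℝ ℝ _
  have hj : Function.Injective j := E.injective.comp LinearMap.inr_injective
  set R := LinearMap.range (borderMatrix A x y c).mulVecLin
  set e := E (1, 0)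
  have he : e ∈ R := by
    have : borderMatrix A x y c *ᵥ E (-1, w) = (y ⬝ᵥ w - c) • e := by
      rw [borderMatrix_mulVec_piOptionEquivProd_symm, hw]
      simp [e, E, ← map_smul, sub_eq_add_neg]
    rw [← inv_smul_smul₀ (sub_ne_zero.2 hyw) e, ← this]
    exact R.smul_mem _ ⟨_, rfl⟩
  have hle : (LinearMap.range A.mulVecLin).map j ≤ R := by
    rintro _ ⟨_, ⟨u, rfl⟩, rfl⟩
    have : j (A *ᵥ u) = borderMatrix A x y c *ᵥ E (0, u) - (y ⬝ᵥ u) • e := by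
      rw [borderMatrix_mulVec_piOptionEquivProd_symm]
      simp [j, e, E, ← map_smul, ← map_sub]
    rw [mulVecLin_apply, this]
    exact R.sub_mem ⟨_, rfl⟩ (R.smul_mem _ he)
  have hne : e ∉ (LinearMap.range A.mulVecLin).map j := by
    rintro ⟨_, _, h⟩
    simpa [j, e, E, LinearEquiv.piOptionEquivProd] using congrFun h none
  calc A.rank + 1 = finrank ℝ ((LinearMap.range A.mulVecLin).map j) + 1 := by
        rw [← (Submodule.equivMapOfInjective j hj _).finrank_eq]; rfl
    _ ≤ (borderMatrix A x y c).rank :=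
        Submodule.finrank_lt_finrank_of_lt (SetLike.lt_iff_le_and_exists.2 ⟨hle, e, he, hne⟩)

end BorderMatrix

theorem kerProj_mulVec_eq_self {n : ℕ} (A : Matrix (Fin n) (Fin n) ℝ) {x : Fin n → ℝ}
    (hx : ∀ i ∈ kerSupport A, x i = 0) : kerProj A *ᵥ x = x := by
  have : kerProj A = diagonal fun i => if i ∉ kerSupport A then 1 else 0 := by
    ext i j
    by_cases hij : i = j <;> simp [kerProj, diagonal, hij]
  ext i
  by_cases hi : i ∈ kerSupport A <;> simp [this, mulVec_diagonal, hi, hx]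

/-- If `AB = P`, `x` vanishes on the kernel support of `A`, and `yᵀBx ≠ c`, then
bordering `A` with column `x`, row `y` and corner `c` increases the rank. -/
theorem border_rank_increase {n : ℕ} (A B : Matrix (Fin n) (Fin n) ℝ)
    (hB : A * B = kerProj A) (x y : Fin n → ℝ) (c : ℝ)
    (hx : ∀ i ∈ kerSupport A, x i = 0)
    (hyx : dotProduct y (B.mulVec x) ≠ c) :
    A.rank + 1 ≤ (borderMatrix A x y c).rank :=
  rank_add_one_le_rank_borderMatrix A x y c
    (by rw [mulVec_mulVec, hB, kerProj_mulVec_eq_self A hx]) hyx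
end
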